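/- Energy decay of the thresholding iteration: with notation as above, define $u^{k+1}(x) = 1$ if $(G_\tau*(\psi(1-2u^k)))(x) \leq 0$ and $u^{k+1}(x) = 0$ otherwise, where $u^k$ takes values in $\{0,1\}$ and $\psi \geq 0$ is bounded measurable with compact support. Then $E^\tau(u^{k+1}) \leq E^\tau(u^k)$ where $E^\tau(u) = \sqrt{\pi/\tau}\int_{\mathbb{R}^n} \psi u\, G_\tau * (\psi(1-u))\,dx$. -/

import Mathlib

open MeasureTheory Real Filter Asymptotics

noncomputable def G (n : ℕ) (τ : ℝ) (x : EuclideanSpace ℝ (Fin n)) : ℝ :=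
  (4 * π * τ) ^ (-(n : ℝ) / 2) * Real.exp (-‖x‖ ^ 2 / (4 * τ))

noncomputable def conv {n : ℕ} (f g : EuclideanSpace ℝ (Fin n) → ℝ)
    (x : EuclideanSpace ℝ (Fin n)) : ℝ :=
  ∫ y, f (x - y) * g y

variable {n : ℕ}

lemma G_nonneg (τ : ℝ) (hτ : 0 < τ) (x : EuclideanSpace ℝ (Fin n)) : 0 ≤ G n τ x := by
  unfold G; positivity

lemma G_cont (τ : ℝ) : Continuous (G n τ) := by
  unfold G; fun_prop

lemma G_even (τ : ℝ) (x y : EuclideanSpace ℝ (Fin n)) : G n τ (x - y) = G n τ (y - x) := by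
  unfold G; rw [norm_sub_rev]

lemma G_le (τ : ℝ) (hτ : 0 < τ) (x : EuclideanSpace ℝ (Fin n)) :
    G n τ x ≤ (4 * π * τ) ^ (-(n : ℝ) / 2) := by
  unfold G
  have h1 : Real.exp (-‖x‖ ^ 2 / (4 * τ)) ≤ 1 := by
    rw [Real.exp_le_one_iff]
    have : (0:ℝ) ≤ ‖x‖^2 := by positivity
    have h4 : (0:ℝ) < 4 * τ := by linarith
    rw [div_nonpos_iff]; right; constructor; · linarith
    · linarith
  nlinarith [Real.rpow_pos_of_pos (show (0:ℝ) < 4*π*τ by positivity) (-(n:ℝ)/2), Real.exp_pos (-‖x‖ ^ 2 / (4 * τ))]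

lemma integrable_gauss (b : ℝ) (hb : 0 < b) :
    Integrable (fun x : EuclideanSpace ℝ (Fin n) => Real.exp (-b * ‖x‖ ^ 2)) := by
  have h := (GaussianFourier.integrable_cexp_neg_mul_sq_norm_add
    (show (0:ℝ) < (Complex.ofReal b).re by simpa using hb) 0 (0 : EuclideanSpace ℝ (Fin n))).re
  refine (integrable_congr ?_).mp h
  filter_upwards with x
  rw [show -(b:ℂ) * ‖x‖ ^ 2 + 0 * _ = ((-b * ‖x‖^2 : ℝ) : ℂ) by push_cast; ring]
  exact Complex.exp_ofReal_re _

lemma G_integrable (τ : ℝ) (hτ : 0 < τ) : Integrable (G n τ) := by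
  unfold G
  have : ∀ x : EuclideanSpace ℝ (Fin n), Real.exp (-‖x‖ ^ 2 / (4 * τ)) = Real.exp (-(1/(4*τ)) * ‖x‖^2) := by
    intro x; congr 1; field_simp
  refine (((integrable_gauss (n := n) (1/(4*τ)) (by positivity)).const_mul
    ((4 * π * τ) ^ (-(n:ℝ) / 2))).congr ?_)
  filter_upwards with x
  rw [this x]

lemma integral_gauss (b : ℝ) (hb : 0 < b) :
    ∫ x : EuclideanSpace ℝ (Fin n), Real.exp (-b * ‖x‖ ^ 2) = (π / b) ^ ((n:ℝ) / 2) := by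
  have h := GaussianFourier.integral_rexp_neg_mul_sq_norm
    (V := EuclideanSpace ℝ (Fin n)) hb
  rw [h, finrank_euclideanSpace_fin]

lemma CK (s : ℝ) (hs : 0 < s) (a : EuclideanSpace ℝ (Fin n)) :
    ∫ z, G n s (a - z) * G n s z = G n (2 * s) a := by
  set c : ℝ := (4 * π * s) ^ (-(n:ℝ) / 2) with hc
  set w : EuclideanSpace ℝ (Fin n) := (2:ℝ)⁻¹ • a with hw
  have key : ∀ z, G n s (a - z) * G n s z
      = (c * c * Real.exp (-‖a‖ ^ 2 / (8 * s))) * Real.exp (-(1 / (2 * s)) * ‖z - w‖ ^ 2) := by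
    intro z
    have hnorm : ‖a - z‖ ^ 2 + ‖z‖ ^ 2 = ‖a‖ ^ 2 / 2 + 2 * ‖z - w‖ ^ 2 := by
      have e1 : ‖a - z‖ ^ 2 = ‖a‖ ^ 2 - 2 * inner ℝ a z + ‖z‖ ^ 2 :=
        norm_sub_sq_real a z
      have e2 : ‖z - w‖ ^ 2 = ‖z‖ ^ 2 - 2 * inner ℝ z w + ‖w‖ ^ 2 :=
        norm_sub_sq_real z w
      have e3 : (inner ℝ z w : ℝ) = (2:ℝ)⁻¹ * inner ℝ z a := real_inner_smul_right z a _
      have e4 : (inner ℝ a z : ℝ) = inner ℝ z a := real_inner_comm z a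
      have e5 : ‖w‖ = (2:ℝ)⁻¹ * ‖a‖ := by
        rw [hw, norm_smul]; norm_num
      rw [e1, e2, e3, e4, e5]; ring
    unfold G
    rw [mul_mul_mul_comm, ← Real.exp_add,
      show (c * c * Real.exp (-‖a‖ ^ 2 / (8 * s))) * Real.exp (-(1 / (2 * s)) * ‖z - w‖ ^ 2)
        = c * c * Real.exp (-‖a‖ ^ 2 / (8 * s) + -(1 / (2 * s)) * ‖z - w‖ ^ 2) from by
          rw [mul_assoc, ← Real.exp_add]]
    congr 1
    rw [show -‖a - z‖ ^ 2 / (4 * s) + -‖z‖ ^ 2 / (4 * s)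
        = -(‖a - z‖ ^ 2 + ‖z‖ ^ 2) / (4 * s) from by ring, hnorm]
    field_simp
    ring
  calc ∫ z, G n s (a - z) * G n s z
      = ∫ z, (c * c * Real.exp (-‖a‖ ^ 2 / (8 * s))) * Real.exp (-(1 / (2 * s)) * ‖z - w‖ ^ 2) := by
        exact integral_congr_ae (Filter.Eventually.of_forall key)
    _ = (c * c * Real.exp (-‖a‖ ^ 2 / (8 * s))) * ∫ z, Real.exp (-(1 / (2 * s)) * ‖z - w‖ ^ 2) :=
        integral_const_mul _ _
    _ = (c * c * Real.exp (-‖a‖ ^ 2 / (8 * s))) * ∫ z : EuclideanSpace ℝ (Fin n), Real.exp (-(1 / (2 * s)) * ‖z‖ ^ 2) := by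
        rw [integral_sub_right_eq_self (fun z => Real.exp (-(1 / (2 * s)) * ‖z‖ ^ 2)) w]
    _ = (c * c * Real.exp (-‖a‖ ^ 2 / (8 * s))) * (π / (1 / (2 * s))) ^ ((n:ℝ) / 2) := by
        rw [integral_gauss _ (by positivity)]
    _ = G n (2 * s) a := by
        unfold G
        rw [show π / (1 / (2 * s)) = 2 * π * s from by field_simp]
        rw [show -‖a‖ ^ 2 / (4 * (2 * s)) = -‖a‖ ^ 2 / (8 * s) from by ring]
        rw [show (4 * π * (2 * s)) = 8 * π * s from by ring]
        have h1 : (0:ℝ) < 4 * π * s := by positivity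
        have h2 : (0:ℝ) < 2 * π * s := by positivity
        have h3 : (0:ℝ) < 8 * π * s := by positivity
        have hlog : Real.log (2 * π * s) + Real.log (8 * π * s) = 2 * Real.log (4 * π * s) := by
          rw [← Real.log_mul (ne_of_gt h2) (ne_of_gt h3),
            show (2 * π * s) * (8 * π * s) = (4 * π * s) ^ 2 from by ring, Real.log_pow]
          norm_num
        rw [hc, Real.rpow_def_of_pos h1, Real.rpow_def_of_pos h2, Real.rpow_def_of_pos h3]
        simp only [← Real.exp_add]
        rw [Real.exp_eq_exp]
        linear_combination ((n:ℝ) / 2) * hlog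

def BMC {n : ℕ} (g : EuclideanSpace ℝ (Fin n) → ℝ) : Prop :=
  Measurable g ∧ HasCompactSupport g ∧ ∃ C, ∀ x, |g x| ≤ C

lemma BMC.meas {g : EuclideanSpace ℝ (Fin n) → ℝ} (hg : BMC g) : Measurable g := hg.1

lemma BMC.integrable {g : EuclideanSpace ℝ (Fin n) → ℝ} (hg : BMC g) : Integrable g := by
  obtain ⟨hm, hcs, C, hb⟩ := hg
  have h1 : g = Set.indicator (tsupport g) g := (Set.indicator_eq_self.2 (subset_tsupport g)).symm
  rw [h1]
  refine (Measure.integrableOn_of_bounded (M := C) ?_ hm.aestronglyMeasurable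
    ?_).integrable_indicator (isClosed_tsupport g).measurableSet
  · exact hcs.measure_lt_top.ne
  · exact Filter.Eventually.of_forall fun a => by rw [Real.norm_eq_abs]; exact hb a

lemma BMC.sub {g h : EuclideanSpace ℝ (Fin n) → ℝ} (hg : BMC g) (hh : BMC h) :
    BMC (fun x => g x - h x) := by
  obtain ⟨hgm, hgcs, Cg, hgb⟩ := hg
  obtain ⟨hhm, hhcs, Ch, hhb⟩ := hh
  refine ⟨hgm.sub hhm, ?_, Cg + Ch, fun x => ?_⟩
  · have hneg : HasCompactSupport fun x => -h x := by
      rw [HasCompactSupport, tsupport, Function.support_fun_neg]; exact hhcs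
    have h1 : (fun x => g x - h x) = g + fun x => -h x := by
      funext x; simp [sub_eq_add_neg]
    rw [h1]; exact hgcs.add hneg
  · calc |g x - h x| ≤ |g x| + |h x| := abs_sub (g x) (h x)
      _ ≤ Cg + Ch := add_le_add (hgb x) (hhb x)

lemma BMC.mul_bdd {ψ u : EuclideanSpace ℝ (Fin n) → ℝ} (hψ : BMC ψ) (hum : Measurable u)
    (C : ℝ) (hb : ∀ x, |u x| ≤ C) : BMC (fun x => ψ x * u x) := by
  obtain ⟨hψm, hψcs, Cψ, hψb⟩ := hψ
  refine ⟨hψm.mul hum, ?_, Cψ * C, fun x => ?_⟩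
  · exact hψcs.mul_right
  · rw [abs_mul]
    have h0 : (0:ℝ) ≤ Cψ := le_trans (abs_nonneg _) (hψb 0)
    exact mul_le_mul (hψb x) (hb x) (abs_nonneg _) h0

lemma conv_integrand_integrable {τ : ℝ} (hτ : 0 < τ) {g : EuclideanSpace ℝ (Fin n) → ℝ}
    (hg : BMC g) (x : EuclideanSpace ℝ (Fin n)) :
    Integrable fun y => G n τ (x - y) * g y := by
  set M : ℝ := (4 * π * τ) ^ (-(n:ℝ) / 2) with hM
  refine Integrable.mono' (hg.integrable.norm.const_mul M) ?_ ?_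
  · exact (((G_cont τ).measurable.comp (measurable_const.sub measurable_id)).mul
      hg.meas).aestronglyMeasurable
  · refine Filter.Eventually.of_forall fun y => ?_
    rw [norm_mul, Real.norm_eq_abs (G n τ _), abs_of_nonneg (G_nonneg τ hτ _)]
    exact mul_le_mul_of_nonneg_right (G_le τ hτ _) (norm_nonneg _)

lemma conv_meas (τ : ℝ) {g : EuclideanSpace ℝ (Fin n) → ℝ} (hgm : Measurable g) :
    Measurable (conv (G n τ) g) := by
  have h : StronglyMeasurable fun p : EuclideanSpace ℝ (Fin n) × EuclideanSpace ℝ (Fin n) =>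
      G n τ (p.1 - p.2) * g p.2 :=
    (((G_cont τ).measurable.comp (measurable_fst.sub measurable_snd)).mul
      (hgm.comp measurable_snd)).stronglyMeasurable
  unfold conv
  exact h.integral_prod_right'.measurable

lemma conv_bound {τ : ℝ} (hτ : 0 < τ) {g : EuclideanSpace ℝ (Fin n) → ℝ} (hg : BMC g) :
    ∃ D, 0 ≤ D ∧ ∀ x, |conv (G n τ) g x| ≤ D := by
  obtain ⟨C, hb⟩ := hg.2.2
  have hC : (0:ℝ) ≤ C := le_trans (abs_nonneg _) (hb 0)
  refine ⟨C * ∫ y, G n τ y, mul_nonneg hC (integral_nonneg fun y => G_nonneg τ hτ y), fun x => ?_⟩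
  unfold conv
  rw [← Real.norm_eq_abs]
  calc ‖∫ y, G n τ (x - y) * g y‖ ≤ ∫ y, ‖G n τ (x - y) * g y‖ :=
        norm_integral_le_integral_norm _
    _ ≤ ∫ y, G n τ (x - y) * C := by
        refine integral_mono (conv_integrand_integrable hτ hg x).norm
          (((integrable_comp_sub_left (G n τ) x).2 (G_integrable τ hτ)).mul_const C) fun y => ?_
        rw [norm_mul, Real.norm_eq_abs (G n τ _), abs_of_nonneg (G_nonneg τ hτ _),
          Real.norm_eq_abs]
        exact mul_le_mul_of_nonneg_left (hb y) (G_nonneg τ hτ _)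
    _ = C * ∫ y, G n τ y := by
        rw [integral_mul_const, integral_sub_left_eq_self (G n τ) volume x, mul_comm]

lemma conv_sub {τ : ℝ} (hτ : 0 < τ) {g h : EuclideanSpace ℝ (Fin n) → ℝ}
    (hg : BMC g) (hh : BMC h) (x : EuclideanSpace ℝ (Fin n)) :
    conv (G n τ) (fun y => g y - h y) x = conv (G n τ) g x - conv (G n τ) h x := by
  unfold conv
  rw [← integral_sub (conv_integrand_integrable hτ hg x) (conv_integrand_integrable hτ hh x)]
  apply integral_congr_ae
  filter_upwards with y
  ring

lemma conv_const_mul (τ : ℝ) (c : ℝ) (g : EuclideanSpace ℝ (Fin n) → ℝ)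
    (x : EuclideanSpace ℝ (Fin n)) :
    conv (G n τ) (fun y => c * g y) x = c * conv (G n τ) g x := by
  unfold conv
  rw [← integral_const_mul]
  apply integral_congr_ae
  filter_upwards with y
  ring

lemma outer_integrable {τ : ℝ} (hτ : 0 < τ) {f g : EuclideanSpace ℝ (Fin n) → ℝ}
    (hf : BMC f) (hg : BMC g) : Integrable fun x => f x * conv (G n τ) g x := by
  obtain ⟨D, hD0, hD⟩ := conv_bound hτ hg
  exact (BMC.mul_bdd hf (conv_meas τ hg.meas) D hD).integrable

lemma CK' (s : ℝ) (hs : 0 < s) (x y : EuclideanSpace ℝ (Fin n)) :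
    ∫ z, G n s (x - z) * G n s (z - y) = G n (2 * s) (x - y) := by
  have h := integral_add_right_eq_self (μ := volume)
    (fun z => G n s (x - z) * G n s (z - y)) y
  rw [← h]
  have h2 : ∀ z : EuclideanSpace ℝ (Fin n),
      G n s (x - (z + y)) * G n s (z + y - y) = G n s ((x - y) - z) * G n s z := by
    intro z
    rw [show x - (z + y) = (x - y) - z from by abel, add_sub_cancel_right]
  rw [integral_congr_ae (Filter.Eventually.of_forall h2)]
  exact CK s hs (x - y)

lemma B_symm {τ : ℝ} (hτ : 0 < τ) {f g : EuclideanSpace ℝ (Fin n) → ℝ}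
    (hf : BMC f) (hg : BMC g) :
    ∫ x, f x * conv (G n τ) g x = ∫ x, g x * conv (G n τ) f x := by
  set M : ℝ := (4 * π * τ) ^ (-(n:ℝ) / 2) with hM
  have hswap : Integrable (Function.uncurry fun x y => f x * (G n τ (x - y) * g y))
      (volume.prod volume) := by
    refine Integrable.mono'
      (Integrable.mul_prod hf.integrable.norm (hg.integrable.norm.const_mul M)) ?_ ?_
    · exact ((hf.meas.comp measurable_fst).mul
        (((G_cont τ).measurable.comp (measurable_fst.sub measurable_snd)).mul
          (hg.meas.comp measurable_snd))).aestronglyMeasurable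
    · refine Filter.Eventually.of_forall fun p => ?_
      simp only [Function.uncurry, norm_mul]
      have h1 : ‖G n τ (p.1 - p.2)‖ ≤ M := by
        rw [Real.norm_eq_abs, abs_of_nonneg (G_nonneg τ hτ _)]; exact G_le τ hτ _
      calc ‖f p.1‖ * (‖G n τ (p.1 - p.2)‖ * ‖g p.2‖)
          ≤ ‖f p.1‖ * (M * ‖g p.2‖) := by gcongr
        _ = ‖f p.1‖ * (M * ‖g p.2‖) := rfl
  calc ∫ x, f x * conv (G n τ) g x = ∫ x, ∫ y, f x * (G n τ (x - y) * g y) := by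
        apply integral_congr_ae; filter_upwards with x
        exact (integral_const_mul (f x) _).symm
    _ = ∫ y, ∫ x, f x * (G n τ (x - y) * g y) := integral_integral_swap hswap
    _ = ∫ y, g y * conv (G n τ) f y := by
        apply integral_congr_ae; filter_upwards with y
        have h1 : ∀ x, f x * (G n τ (x - y) * g y) = g y * (G n τ (y - x) * f x) := by
          intro x; rw [G_even]; ring
        calc ∫ x, f x * (G n τ (x - y) * g y)
            = ∫ x, g y * (G n τ (y - x) * f x) :=
              integral_congr_ae (Filter.Eventually.of_forall h1)
          _ = g y * conv (G n τ) f y := integral_const_mul _ _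

lemma B_nonneg {τ : ℝ} (hτ : 0 < τ) {g : EuclideanSpace ℝ (Fin n) → ℝ} (hg : BMC g) :
    0 ≤ ∫ x, g x * conv (G n τ) g x := by
  set s : ℝ := τ / 2 with hs
  have hs0 : 0 < s := by rw [hs]; positivity
  set h : EuclideanSpace ℝ (Fin n) → ℝ := conv (G n s) g with hh
  have hhm : Measurable h := conv_meas s hg.meas
  obtain ⟨Mh, hMh0, hMh⟩ := conv_bound hs0 hg
  set MG : ℝ := (4 * π * s) ^ (-(n:ℝ) / 2) with hMG
  have key1 : ∀ x, conv (G n τ) g x = ∫ z, G n s (z - x) * h z := by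
    intro x
    have hfub : Integrable (Function.uncurry fun z y => G n s (z - x) * (G n s (z - y) * g y))
        (volume.prod volume) := by
      refine Integrable.mono'
        (Integrable.mul_prod ((G_integrable s hs0).comp_sub_right x)
          (hg.integrable.norm.const_mul MG)) ?_ ?_
      · exact (((G_cont s).measurable.comp (measurable_fst.sub measurable_const)).mul
          ((((G_cont s).measurable.comp (measurable_fst.sub measurable_snd))).mul
            (hg.meas.comp measurable_snd))).aestronglyMeasurable
      · refine Filter.Eventually.of_forall fun p => ?_
        simp only [Function.uncurry, norm_mul]
        have h1 : ‖G n s (p.1 - p.2)‖ ≤ MG := by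
          rw [Real.norm_eq_abs, abs_of_nonneg (G_nonneg s hs0 _)]; exact G_le s hs0 _
        have h2 : ‖G n s (p.1 - x)‖ = G n s (p.1 - x) := by
          rw [Real.norm_eq_abs, abs_of_nonneg (G_nonneg s hs0 _)]
        rw [h2]
        have h3 : (0:ℝ) ≤ G n s (p.1 - x) := G_nonneg s hs0 _
        calc G n s (p.1 - x) * (‖G n s (p.1 - p.2)‖ * ‖g p.2‖)
            ≤ G n s (p.1 - x) * (MG * ‖g p.2‖) := by gcongr
          _ = G n s (p.1 - x) * (MG * ‖g p.2‖) := rfl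
    symm
    calc ∫ z, G n s (z - x) * h z
        = ∫ z, ∫ y, G n s (z - x) * (G n s (z - y) * g y) := by
          apply integral_congr_ae; filter_upwards with z
          exact (integral_const_mul _ _).symm
      _ = ∫ y, ∫ z, G n s (z - x) * (G n s (z - y) * g y) := integral_integral_swap hfub
      _ = ∫ y, G n τ (x - y) * g y := by
          apply integral_congr_ae; filter_upwards with y
          calc ∫ z, G n s (z - x) * (G n s (z - y) * g y)
              = ∫ z, (G n s (x - z) * G n s (z - y)) * g y := by
                apply integral_congr_ae; filter_upwards with z
                rw [G_even s z x]
                ring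
            _ = (∫ z, G n s (x - z) * G n s (z - y)) * g y := integral_mul_const _ _
            _ = G n τ (x - y) * g y := by
                rw [CK' s hs0 x y, show 2 * s = τ from by rw [hs]; ring]
  have key2 : ∫ x, g x * conv (G n τ) g x = ∫ z, h z * h z := by
    have hq : Integrable (fun w : EuclideanSpace ℝ (Fin n) × EuclideanSpace ℝ (Fin n) =>
        ‖g w.1‖ * (G n s w.2 * Mh)) (volume.prod volume) :=
      Integrable.mul_prod hg.integrable.norm ((G_integrable s hs0).mul_const Mh)
    have hmp := measurePreserving_prod_sub (μ := (volume : Measure (EuclideanSpace ℝ (Fin n))))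
      (volume : Measure (EuclideanSpace ℝ (Fin n)))
    have hcomp : Integrable (fun p : EuclideanSpace ℝ (Fin n) × EuclideanSpace ℝ (Fin n) =>
        ‖g p.1‖ * (G n s (p.2 - p.1) * Mh)) (volume.prod volume) :=
      (hmp.integrable_comp hq.aestronglyMeasurable).2 hq
    have hfub : Integrable (Function.uncurry fun x z => g x * (G n s (z - x) * h z))
        (volume.prod volume) := by
      refine Integrable.mono' hcomp ?_ ?_
      · exact ((hg.meas.comp measurable_fst).mul
          (((G_cont s).measurable.comp (measurable_snd.sub measurable_fst)).mul
            (hhm.comp measurable_snd))).aestronglyMeasurable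
      · refine Filter.Eventually.of_forall fun p => ?_
        simp only [Function.uncurry, norm_mul]
        have h2 : ‖G n s (p.2 - p.1)‖ = G n s (p.2 - p.1) := by
          rw [Real.norm_eq_abs, abs_of_nonneg (G_nonneg s hs0 _)]
        rw [h2]
        have h3 : ‖h p.2‖ ≤ Mh := by rw [Real.norm_eq_abs]; exact hMh p.2
        calc ‖g p.1‖ * (G n s (p.2 - p.1) * ‖h p.2‖)
            ≤ ‖g p.1‖ * (G n s (p.2 - p.1) * Mh) := by
              gcongr
              exact G_nonneg s hs0 _
          _ = ‖g p.1‖ * (G n s (p.2 - p.1) * Mh) := rfl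
    calc ∫ x, g x * conv (G n τ) g x
        = ∫ x, ∫ z, g x * (G n s (z - x) * h z) := by
          apply integral_congr_ae; filter_upwards with x
          rw [key1 x]
          exact (integral_const_mul _ _).symm
      _ = ∫ z, ∫ x, g x * (G n s (z - x) * h z) := integral_integral_swap hfub
      _ = ∫ z, h z * h z := by
          apply integral_congr_ae; filter_upwards with z
          calc ∫ x, g x * (G n s (z - x) * h z)
              = ∫ x, (G n s (z - x) * g x) * h z := by
                apply integral_congr_ae; filter_upwards with x; ring
            _ = (∫ x, G n s (z - x) * g x) * h z := integral_mul_const _ _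
            _ = h z * h z := rfl
  rw [key2]
  exact integral_nonneg fun z => mul_self_nonneg (h z)

lemma BMC.const_mul {g : EuclideanSpace ℝ (Fin n) → ℝ} (hg : BMC g) (c : ℝ) :
    BMC fun x => c * g x := by
  obtain ⟨hm, hcs, C, hb⟩ := hg
  refine ⟨measurable_const.mul hm, ?_, |c| * C, fun x => ?_⟩
  · exact hcs.mul_left
  · rw [abs_mul]; exact mul_le_mul_of_nonneg_left (hb x) (abs_nonneg c)


theorem thresholding_energy_decay (n : ℕ) (τ : ℝ) (hτ : 0 < τ)
    (ψ : EuclideanSpace ℝ (Fin n) → ℝ) (hψm : Measurable ψ)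
    (hψ0 : ∀ x, 0 ≤ ψ x) (hψb : ∃ C, ∀ x, ψ x ≤ C)
    (hψcs : HasCompactSupport ψ)
    (uk : EuclideanSpace ℝ (Fin n) → ℝ) (hukm : Measurable uk)
    (huk : ∀ x, uk x ∈ ({0, 1} : Set ℝ))
    (uk1 : EuclideanSpace ℝ (Fin n) → ℝ)
    (huk1 : ∀ x, uk1 x =
      if conv (G n τ) (fun y => ψ y * (1 - 2 * uk y)) x ≤ 0 then 1 else 0) :
    Real.sqrt (π / τ) *
        (∫ x, ψ x * uk1 x * conv (G n τ) (fun y => ψ y * (1 - uk1 y)) x) ≤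
      Real.sqrt (π / τ) *
        ∫ x, ψ x * uk x * conv (G n τ) (fun y => ψ y * (1 - uk y)) x := by
  obtain ⟨Cψ, hCψ⟩ := hψb
  have hψabs : ∀ x, |ψ x| ≤ Cψ := fun x => by
    rw [abs_of_nonneg (hψ0 x)]; exact hCψ x
  have hψB : BMC ψ := ⟨hψm, hψcs, Cψ, hψabs⟩
  have huk01 : ∀ x, uk x = 0 ∨ uk x = 1 := fun x => by simpa using huk x
  have hukabs : ∀ x, |uk x| ≤ 1 := fun x => by
    rcases huk01 x with h | h <;> rw [h] <;> norm_num
  have hwB : BMC (fun y => ψ y * (1 - 2 * uk y)) :=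
    BMC.mul_bdd hψB (measurable_const.sub (measurable_const.mul hukm)) 3
      (fun x => by rcases huk01 x with h | h <;> rw [h] <;> norm_num)
  have hφm : Measurable (conv (G n τ) (fun y => ψ y * (1 - 2 * uk y))) :=
    conv_meas τ hwB.meas
  have huk1m : Measurable uk1 := by
    have h1 : uk1 = fun x =>
        if conv (G n τ) (fun y => ψ y * (1 - 2 * uk y)) x ≤ 0 then (1:ℝ) else 0 :=
      funext huk1
    rw [h1]
    exact Measurable.ite (measurableSet_le hφm measurable_const)
      measurable_const measurable_const
  have huk1abs : ∀ x, |uk1 x| ≤ 1 := fun x => by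
    rw [huk1 x]; split <;> norm_num
  have hg0 : BMC (fun x => ψ x * uk x) := BMC.mul_bdd hψB hukm 1 hukabs
  have hg1 : BMC (fun x => ψ x * uk1 x) := BMC.mul_bdd hψB huk1m 1 huk1abs
  -- Step 1: the thresholding minimizes the linear functional pointwise
  have hmin : (∫ x, ψ x * uk1 x * conv (G n τ) (fun y => ψ y * (1 - 2 * uk y)) x)
      ≤ ∫ x, ψ x * uk x * conv (G n τ) (fun y => ψ y * (1 - 2 * uk y)) x := by
    refine integral_mono (outer_integrable hτ hg1 hwB) (outer_integrable hτ hg0 hwB)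
      fun x => ?_
    rcases le_or_gt (conv (G n τ) (fun y => ψ y * (1 - 2 * uk y)) x) 0 with hc | hc
    · have h1 : uk1 x = 1 := by rw [huk1 x, if_pos hc]
      rcases huk01 x with h | h
      · rw [h1, h]; nlinarith [hψ0 x]
      · rw [h1, h]
    · have h1 : uk1 x = 0 := by rw [huk1 x, if_neg (not_le.2 hc)]
      rcases huk01 x with h | h
      · rw [h1, h]
      · rw [h1, h]; nlinarith [hψ0 x]
  -- conv expansions
  have hconvψu : ∀ (u : EuclideanSpace ℝ (Fin n) → ℝ), Measurable u → (∀ x, |u x| ≤ 1) →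
      ∀ x, conv (G n τ) (fun y => ψ y * (1 - u y)) x
        = conv (G n τ) ψ x - conv (G n τ) (fun y => ψ y * u y) x := by
    intro u hum hub x
    have hgu : BMC fun y => ψ y * u y := BMC.mul_bdd hψB hum 1 hub
    have h2 : conv (G n τ) (fun y => ψ y - ψ y * u y) x
        = conv (G n τ) ψ x - conv (G n τ) (fun y => ψ y * u y) x :=
      conv_sub hτ hψB hgu x
    have h4 : (fun y => ψ y * (1 - u y)) = fun y => ψ y - ψ y * u y :=
      funext fun y => by ring
    rw [h4, h2]
  have hconvw : ∀ x, conv (G n τ) (fun y => ψ y * (1 - 2 * uk y)) x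
      = conv (G n τ) ψ x - 2 * conv (G n τ) (fun y => ψ y * uk y) x := by
    intro x
    have h2 : conv (G n τ) (fun y => ψ y - 2 * (ψ y * uk y)) x
        = conv (G n τ) ψ x - conv (G n τ) (fun y => 2 * (ψ y * uk y)) x :=
      conv_sub hτ hψB (hg0.const_mul 2) x
    have h3 : conv (G n τ) (fun y => 2 * (ψ y * uk y)) x
        = 2 * conv (G n τ) (fun y => ψ y * uk y) x :=
      conv_const_mul τ 2 (fun y => ψ y * uk y) x
    have h4 : (fun y => ψ y * (1 - 2 * uk y)) = fun y => ψ y - 2 * (ψ y * uk y) :=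
      funext fun y => by ring
    rw [h4, h2, h3]
  -- energy expansion
  have hE : ∀ (u : EuclideanSpace ℝ (Fin n) → ℝ), Measurable u → (∀ x, |u x| ≤ 1) →
      (∫ x, ψ x * u x * conv (G n τ) (fun y => ψ y * (1 - u y)) x)
      = (∫ x, ψ x * u x * conv (G n τ) ψ x)
        - ∫ x, ψ x * u x * conv (G n τ) (fun y => ψ y * u y) x := by
    intro u hum hub
    have hgu : BMC fun y => ψ y * u y := BMC.mul_bdd hψB hum 1 hub
    rw [← integral_sub (outer_integrable hτ hgu hψB) (outer_integrable hτ hgu hgu)]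
    apply integral_congr_ae; filter_upwards with x
    rw [hconvψu u hum hub x]; ring
  -- linearization expansion
  have hL : ∀ (u : EuclideanSpace ℝ (Fin n) → ℝ), Measurable u → (∀ x, |u x| ≤ 1) →
      (∫ x, ψ x * u x * conv (G n τ) (fun y => ψ y * (1 - 2 * uk y)) x)
      = (∫ x, ψ x * u x * conv (G n τ) ψ x)
        - 2 * ∫ x, ψ x * u x * conv (G n τ) (fun y => ψ y * uk y) x := by
    intro u hum hub
    have hgu : BMC fun y => ψ y * u y := BMC.mul_bdd hψB hum 1 hub
    rw [← integral_const_mul 2, ← integral_sub (outer_integrable hτ hgu hψB)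
      ((outer_integrable hτ hgu hg0).const_mul 2)]
    apply integral_congr_ae; filter_upwards with x
    rw [hconvw x]; ring
  -- quadratic positivity
  have hQ0 : 0 ≤ ∫ x, (ψ x * uk1 x - ψ x * uk x) *
      conv (G n τ) (fun y => ψ y * uk1 y - ψ y * uk y) x :=
    B_nonneg hτ (BMC.sub hg1 hg0)
  have hQexp : (∫ x, (ψ x * uk1 x - ψ x * uk x) *
        conv (G n τ) (fun y => ψ y * uk1 y - ψ y * uk y) x)
      = ((∫ x, ψ x * uk1 x * conv (G n τ) (fun y => ψ y * uk1 y) x)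
          - ∫ x, ψ x * uk1 x * conv (G n τ) (fun y => ψ y * uk y) x)
        - ((∫ x, ψ x * uk x * conv (G n τ) (fun y => ψ y * uk1 y) x)
          - ∫ x, ψ x * uk x * conv (G n τ) (fun y => ψ y * uk y) x) := by
    have h1 : ∀ x, (ψ x * uk1 x - ψ x * uk x) *
        conv (G n τ) (fun y => ψ y * uk1 y - ψ y * uk y) x
        = (ψ x * uk1 x * conv (G n τ) (fun y => ψ y * uk1 y) x
            - ψ x * uk1 x * conv (G n τ) (fun y => ψ y * uk y) x)
          - (ψ x * uk x * conv (G n τ) (fun y => ψ y * uk1 y) x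
            - ψ x * uk x * conv (G n τ) (fun y => ψ y * uk y) x) := by
      intro x
      rw [conv_sub hτ hg1 hg0 x]; ring
    have hI1 : Integrable (fun x => ψ x * uk1 x * conv (G n τ) (fun y => ψ y * uk1 y) x
        - ψ x * uk1 x * conv (G n τ) (fun y => ψ y * uk y) x) volume :=
      (outer_integrable hτ hg1 hg1).sub (outer_integrable hτ hg1 hg0)
    have hI2 : Integrable (fun x => ψ x * uk x * conv (G n τ) (fun y => ψ y * uk1 y) x
        - ψ x * uk x * conv (G n τ) (fun y => ψ y * uk y) x) volume :=
      (outer_integrable hτ hg0 hg1).sub (outer_integrable hτ hg0 hg0)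
    rw [integral_congr_ae (Filter.Eventually.of_forall h1), integral_sub hI1 hI2,
      integral_sub (outer_integrable hτ hg1 hg1) (outer_integrable hτ hg1 hg0),
      integral_sub (outer_integrable hτ hg0 hg1) (outer_integrable hτ hg0 hg0)]
  rw [hQexp] at hQ0
  have hsym : (∫ x, ψ x * uk x * conv (G n τ) (fun y => ψ y * uk1 y) x)
      = ∫ x, ψ x * uk1 x * conv (G n τ) (fun y => ψ y * uk y) x :=
    B_symm hτ hg0 hg1
  rw [hL uk1 huk1m huk1abs, hL uk hukm hukabs] at hmin
  refine mul_le_mul_of_nonneg_left ?_ (Real.sqrt_nonneg _)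
  rw [hE uk1 huk1m huk1abs, hE uk hukm hukabs]
  linarith [hmin, hQ0, hsym]
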